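/- Let f₁, f₂ be Morse-Smale diffeomorphisms in MS^{2k}(1,1,1) (one sink, one source, one saddle) with saddles σ_{f₁}, σ_{f₂}. If f₁^{k₁} and f₂^{k₂} are conjugate for some positive integers k₁, k₂, then the stable manifolds W^s(σ_{f₁}) and W^s(σ_{f₂}) have equivalent embedding. -/

import Mathlib

open Filter Topology Set Metric

section Defs

variable {M : Type*} [MetricSpace M]

/-- The non-wandering set of a homeomorphism `f`. -/
def nonWanderingSet (f : M ≃ₜ M) : Set M :=
  {p | ∀ U ∈ 𝓝 p, ∃ n : ℕ, 1 ≤ n ∧ ((⇑f)^[n] '' U ∩ U).Nonempty}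

/-- The stable manifold `W^s(p)` of a fixed point `p` of `f`: points whose forward
orbit converges to `p`. -/
def stableManifold (f : M ≃ₜ M) (p : M) : Set M :=
  {y | Tendsto (fun k => (⇑f)^[k] y) atTop (𝓝 p)}

/-- A Morse–Smale diffeomorphism of class `MS^{2k}(1,1,1)`: a homeomorphism of a
closed `2k`-manifold whose non-wandering set consists of exactly one hyperbolic
sink, one hyperbolic source and one hyperbolic saddle (each a fixed point). -/
structure MS111 (f : M ≃ₜ M) where
  /-- the sink -/
  snk : M
  /-- the source -/
  src : M
  /-- the saddle -/
  sdl : M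
  snk_fixed : f snk = snk
  src_fixed : f src = src
  sdl_fixed : f sdl = sdl
  distinct : snk ≠ src ∧ snk ≠ sdl ∧ src ≠ sdl
  nw_eq : nonWanderingSet f = {snk, src, sdl}
  /-- the sink is attracting: it has a trapping neighborhood shrinking to it -/
  snk_attracting : ∃ U, IsOpen U ∧ snk ∈ U ∧ f '' closure U ⊆ U ∧
    (⋂ n : ℕ, (⇑f)^[n] '' U) = {snk}
  /-- the source is repelling -/
  src_repelling : ∃ U, IsOpen U ∧ src ∈ U ∧ f.symm '' closure U ⊆ U ∧
    (⋂ n : ℕ, (⇑f.symm)^[n] '' U) = {src}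
  /-- the saddle has nontrivial stable and unstable manifolds -/
  sdl_saddle : (stableManifold f sdl \ {sdl}).Nonempty ∧
    (stableManifold f.symm sdl \ {sdl}).Nonempty

end Defs

/-- Submanifolds `N₁ ⊆ M₁`, `N₂ ⊆ M₂` have equivalent embedding: there are open
neighborhoods `U₁, U₂` of their closures and a homeomorphism `h : U₁ → U₂` with
`h(N₁) = N₂`. -/
def EquivalentEmbedding {M₁ M₂ : Type*} [TopologicalSpace M₁] [TopologicalSpace M₂]
    (N₁ : Set M₁) (N₂ : Set M₂) : Prop :=
  ∃ U₁ : Set M₁, ∃ U₂ : Set M₂, IsOpen U₁ ∧ IsOpen U₂ ∧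
    closure N₁ ⊆ U₁ ∧ closure N₂ ⊆ U₂ ∧
      ∃ h : M₁ → M₂, ∃ g : M₂ → M₁,
        ContinuousOn h U₁ ∧ ContinuousOn g U₂ ∧ h '' U₁ = U₂ ∧
          (∀ x ∈ U₁, g (h x) = x) ∧ (∀ y ∈ U₂, h (g y) = y) ∧ h '' N₁ = N₂

open Function

/-!
A conjugacy `h` between `f₁^{k₁}` and `f₂^{k₂}` carries the stable and unstable sets of the
saddle `σ₁` to those of the fixed point `h σ₁` of `f₂^{k₂}`, and for a fixed point of `f` these
sets do not change when `f` is replaced by an iterate. So `h σ₁` is a non-wandering point of `f₂`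
with nontrivial stable and unstable sets; the sink has no unstable set and the source no stable
set, because their trapping neighbourhoods shrink to a point. Hence `h σ₁ = σ₂`, and `h` itself
maps `W^s(σ₁)` onto `W^s(σ₂)`.
-/

namespace Homeomorph

variable {X : Type*} [TopologicalSpace X]

instance : IsOneApplyEqSelf (X ≃ₜ X) X where
  one_apply_eq_self _ := rfl

instance : IsMulApplyEqComp (X ≃ₜ X) X where
  mul_apply_eq_comp _ _ _ := rfl

theorem equivalentEmbedding {Y : Type*} [TopologicalSpace Y] (h : X ≃ₜ Y) {N₁ : Set X}
    {N₂ : Set Y} (hN : h '' N₁ = N₂) : EquivalentEmbedding N₁ N₂ :=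
  ⟨univ, univ, isOpen_univ, isOpen_univ, subset_univ _, subset_univ _, h, h.symm,
    h.continuous.continuousOn, h.symm.continuous.continuousOn,
    image_univ_of_surjective h.surjective, fun x _ => h.symm_apply_apply x,
    fun y _ => h.apply_symm_apply y, hN⟩

end Homeomorph

theorem tendsto_iterate_of_tendsto_iterate_iterate {X : Type*} [TopologicalSpace X] {f : X → X}
    (hf : Continuous f) {p x : X} (hp : IsFixedPt f p) {k : ℕ} (hk : 0 < k)
    (h : Tendsto (fun n => (f^[k])^[n] x) atTop (𝓝 p)) :
    Tendsto (fun n => f^[n] x) atTop (𝓝 p) := by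
  refine fun U hU => mem_map.2 ?_
  have hV : ∀ᶠ y in 𝓝 p, ∀ j ∈ Finset.range k, f^[j] y ∈ U := by
    refine (eventually_all_finset _).2 fun j _ => ?_
    have hj := (hf.iterate j).tendsto p
    rw [(hp.iterate j).eq] at hj
    exact hj hU
  -- `f^[n] x = f^[n % k] ((f^[k])^[n / k] x)` and `n % k` ranges over finitely many values
  filter_upwards [(h.comp (Nat.tendsto_div_const_atTop hk.ne')).eventually hV] with n hn
  have hn := hn (n % k) (Finset.mem_range.2 (Nat.mod_lt n hk))
  rwa [comp_apply, ← iterate_mul, ← iterate_add_apply, Nat.mod_add_div] at hn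

section StableManifold

variable {M : Type*} [MetricSpace M]

theorem stableManifold_pow (f : M ≃ₜ M) {p : M} (hp : f p = p) {k : ℕ} (hk : 0 < k) :
    stableManifold (f ^ k) p = stableManifold f p := by
  ext x
  simp only [stableManifold, mem_ofPred_eq, FunLike.coe_pow_eq_iterate]
  refine ⟨tendsto_iterate_of_tendsto_iterate_iterate f.continuous hp hk, fun h => ?_⟩
  simpa only [comp_def, id, ← iterate_mul] using h.comp (tendsto_id.const_mul_atTop' hk)

theorem stableManifold_symm_pow (f : M ≃ₜ M) {p : M} (hp : f p = p) {k : ℕ} (hk : 0 < k) :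
    stableManifold (f ^ k).symm p = stableManifold f.symm p := by
  rw [show (f ^ k).symm = f.symm ^ k from (inv_pow f k).symm,
    stableManifold_pow f.symm (f.symm_apply_eq.2 hp.symm) hk]

theorem Homeomorph.image_stableManifold {N : Type*} [MetricSpace N] (h : M ≃ₜ N)
    {f : M ≃ₜ M} {g : N ≃ₜ N} (hc : Semiconj h f g) (p : M) :
    h '' stableManifold f p = stableManifold g (h p) := by
  suffices h ⁻¹' stableManifold g (h p) = stableManifold f p by
    rw [← this, h.image_preimage]
  ext x
  have horbit : (fun n => g^[n] (h x)) = h ∘ fun n => f^[n] x :=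
    funext fun n => ((hc.iterate_right n).eq x).symm
  simp only [stableManifold, mem_preimage, mem_ofPred_eq, horbit]
  exact h.isEmbedding.tendsto_nhds_iff.symm

theorem stableManifold_symm_subset_of_trapping {f : M ≃ₜ M} {q : M} {U : Set M}
    (hU : U ∈ 𝓝 q) (hfU : f '' U ⊆ U) (hshrink : ⋂ n : ℕ, f^[n] '' U = {q}) :
    stableManifold f.symm q ⊆ {q} := by
  intro y hy
  have hanti : Antitone fun n => f^[n] '' U := antitone_nat_of_succ_le fun n => by
    rw [iterate_succ, image_comp]
    exact image_mono hfU
  rw [← hshrink, mem_iInter]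
  intro m
  obtain ⟨n, hmn, hn⟩ := ((eventually_ge_atTop m).and (hy.eventually_mem hU)).exists
  exact hanti hmn ⟨_, hn, LeftInverse.iterate f.apply_symm_apply n y⟩

theorem mem_nonWanderingSet_of_isPeriodicPt {f : M ≃ₜ M} {p : M} {n : ℕ} (hn : 0 < n)
    (hp : IsPeriodicPt f n p) : p ∈ nonWanderingSet f :=
  fun _ hU => ⟨n, hn, p, ⟨p, mem_of_mem_nhds hU, hp⟩, mem_of_mem_nhds hU⟩

end StableManifold

namespace MS111

variable {M : Type*} [MetricSpace M] {f : M ≃ₜ M}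

theorem stableManifold_symm_snk_subset (D : MS111 f) : stableManifold f.symm D.snk ⊆ {D.snk} :=
  let ⟨_, hUo, hsnk, htrap, hshrink⟩ := D.snk_attracting
  stableManifold_symm_subset_of_trapping (hUo.mem_nhds hsnk)
    ((image_mono subset_closure).trans htrap) hshrink

theorem stableManifold_src_subset (D : MS111 f) : stableManifold f D.src ⊆ {D.src} :=
  let ⟨_, hUo, hsrc, htrap, hshrink⟩ := D.src_repelling
  stableManifold_symm_subset_of_trapping (f := f.symm) (hUo.mem_nhds hsrc)
    ((image_mono subset_closure).trans htrap) hshrink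

theorem eq_sdl_of_pow (D : MS111 f) {k : ℕ} (hk : 0 < k) {p : M} (hp : (f ^ k) p = p)
    (hs : (stableManifold (f ^ k) p \ {p}).Nonempty)
    (hu : (stableManifold (f ^ k).symm p \ {p}).Nonempty) : p = D.sdl := by
  have hnw : p ∈ nonWanderingSet f := by
    refine mem_nonWanderingSet_of_isPeriodicPt hk ?_
    rwa [IsPeriodicPt, IsFixedPt, ← FunLike.coe_pow_eq_iterate]
  rw [D.nw_eq] at hnw
  rcases hnw with rfl | rfl | rfl
  · rw [stableManifold_symm_pow f D.snk_fixed hk] at hu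
    obtain ⟨y, hy, hne⟩ := hu
    exact absurd (D.stableManifold_symm_snk_subset hy) hne
  · rw [stableManifold_pow f D.src_fixed hk] at hs
    obtain ⟨y, hy, hne⟩ := hs
    exact absurd (D.stableManifold_src_subset hy) hne
  · rfl

theorem map_sdl_of_semiconj_pow {N : Type*} [MetricSpace N] {g : N ≃ₜ N} (D : MS111 f)
    (D' : MS111 g) (h : M ≃ₜ N) {k l : ℕ} (hk : 0 < k) (hl : 0 < l)
    (hc : Semiconj h ⇑(f ^ k) ⇑(g ^ l)) : h D.sdl = D'.sdl := by
  have hfix : (f ^ k) D.sdl = D.sdl := by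
    rw [FunLike.coe_pow_eq_iterate]
    exact IsFixedPt.iterate D.sdl_fixed k
  have hnontrivial : ∀ {f' : M ≃ₜ M} {g' : N ≃ₜ N}, Semiconj h f' g' →
      (stableManifold f' D.sdl \ {D.sdl}).Nonempty →
        (stableManifold g' (h D.sdl) \ {h D.sdl}).Nonempty := fun hc' hne => by
    rw [← h.image_stableManifold hc', ← image_singleton, ← image_sdiff h.injective]
    exact hne.image h
  refine D'.eq_sdl_of_pow hl (by rw [← hc.eq, hfix]) (hnontrivial hc ?_)
    (hnontrivial (hc.inverses_right (f ^ k).apply_symm_apply (g ^ l).symm_apply_apply) ?_)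
  · rw [stableManifold_pow f D.sdl_fixed hk]
    exact D.sdl_saddle.1
  · rw [stableManifold_symm_pow f D.sdl_fixed hk]
    exact D.sdl_saddle.2

end MS111

theorem equivalentEmbedding_of_iterates_conjugate_general
    {M₁ M₂ : Type*} [MetricSpace M₁]
    [MetricSpace M₂]
    (f₁ : M₁ ≃ₜ M₁) (f₂ : M₂ ≃ₜ M₂) (D₁ : MS111 f₁) (D₂ : MS111 f₂)
    (k₁ k₂ : ℕ) (hk₁ : 1 ≤ k₁) (hk₂ : 1 ≤ k₂)
    (hconj : ∃ h : M₁ ≃ₜ M₂, ∀ x, h ((⇑f₁)^[k₁] x) = (⇑f₂)^[k₂] (h x)) :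
    EquivalentEmbedding (stableManifold f₁ D₁.sdl) (stableManifold f₂ D₂.sdl) := by
  obtain ⟨h, hc⟩ := hconj
  have hpow : Semiconj h ⇑(f₁ ^ k₁) ⇑(f₂ ^ k₂) := by
    rw [FunLike.coe_pow_eq_iterate, FunLike.coe_pow_eq_iterate]
    exact hc
  refine h.equivalentEmbedding ?_
  rw [← stableManifold_pow f₁ D₁.sdl_fixed hk₁, h.image_stableManifold hpow,
    D₁.map_sdl_of_semiconj_pow D₂ h hk₁ hk₂ hpow, stableManifold_pow f₂ D₂.sdl_fixed hk₂]

/-- Let `f₁, f₂` be Morse–Smale diffeomorphisms in `MS^{2k}(1,1,1)` (one sink, one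
source, one saddle) on closed `2k`-manifolds, with saddles `σ_{f₁}, σ_{f₂}`. If
`f₁^{k₁}` and `f₂^{k₂}` are conjugate for some positive integers `k₁, k₂`, then
the stable manifolds `W^s(σ_{f₁})` and `W^s(σ_{f₂})` have equivalent embedding. -/
theorem equivalentEmbedding_of_iterates_conjugate
    {k : ℕ} {M₁ M₂ : Type*} [MetricSpace M₁] [CompactSpace M₁]
    [ChartedSpace (EuclideanSpace ℝ (Fin (2 * k))) M₁]
    [MetricSpace M₂] [CompactSpace M₂]
    [ChartedSpace (EuclideanSpace ℝ (Fin (2 * k))) M₂]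
    (f₁ : M₁ ≃ₜ M₁) (f₂ : M₂ ≃ₜ M₂) (D₁ : MS111 f₁) (D₂ : MS111 f₂)
    (k₁ k₂ : ℕ) (hk₁ : 1 ≤ k₁) (hk₂ : 1 ≤ k₂)
    (hconj : ∃ h : M₁ ≃ₜ M₂, ∀ x, h ((⇑f₁)^[k₁] x) = (⇑f₂)^[k₂] (h x)) :
    EquivalentEmbedding (stableManifold f₁ D₁.sdl) (stableManifold f₂ D₂.sdl) :=
  equivalentEmbedding_of_iterates_conjugate_general f₁ f₂ D₁ D₂ k₁ k₂ hk₁ hk₂ hconj
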